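/- arXiv:1309.0141 — 4 statements merged into one kernel-verified Lean document; each statement's English description precedes it below -/
import Mathlib

section
/- Fix a DMC W with capacity C and capacity-achieving output distribution P_Y^*, fix 0 < ε < 1, and let a sequence of (n, M_n, ε)_{max,det} codes be capacity-achieving, i.e. (1/n) log M_n → C as n → ∞. For each n let P_{X^n Y^n} be the joint law of a uniformly chosen codeword X^n and the corresponding channel output Y^n, let P_{X^n}, P_{Y^n} be its marginals, and let I(X^n;Y^n) = D(P_{X^n Y^n} ‖ P_{X^n} × P_{Y^n}). Then (1/n) I(X^n;Y^n) → C if and only if (1/n) D(P_{Y^n} ‖ (P_Y^*)^n) → 0. -/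
/-!
Let `S_n` be the average over codewords `c_j` of `D(W^n(·|c_j) ‖ (P_Y^*)^n)`. Topsøe's identity
splits `S_n = I(X^n;Y^n) + D(P_{Y^n} ‖ (P_Y^*)^n)`, so once `S_n / n → C` the two limits are
equivalent.

Moving a fraction `t` of the optimal input mass to a letter `a` cannot increase the mutual
information beyond `C`; by Topsøe's identity this gives `D(W(·|a) ‖ (1-t) P_Y^* + t W(·|a)) ≤ C`
for `0 < t < 1`, whence the KKT conditions `W(·|a) ≪ P_Y^*` and `D(W(·|a) ‖ P_Y^*) ≤ C`
(let `t → 0`). The latter gives `S_n ≤ n C`.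

For the lower bound, under `W^n(·|c_j)` the information density `log (W^n / (P_Y^*)^n)` has mean
`S_j = D(W^n(·|c_j) ‖ (P_Y^*)^n)` and variance `O(n)`, so by Chebyshev it stays below `S_j + O(√n)` with probability close
to one. Changing measure, the decoding region of `c_j` has `(P_Y^*)^n`-mass at least
`(1 - ε)/2 · exp (-S_j - O(√n))`. These masses sum to one, and Jensen's inequality over the
codewords yields `S_n ≥ log M_n - O(√n)`.
-/

open Filter

/-- Discrete relative entropy between two probability mass functions on a finite
alphabet (with the usual conventions `0 log 0 = 0`, and dropping terms where the
second argument vanishes — these never occur under absolute continuity). -/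
noncomputable def dKL {α : Type*} [Fintype α] (p q : α → ℝ) : ℝ :=
  ∑ a, p a * Real.log (p a / q a)

/-- `p` is a probability mass function on a finite alphabet. -/
def IsPMF {α : Type*} [Fintype α] (p : α → ℝ) : Prop :=
  (∀ a, 0 ≤ p a) ∧ ∑ a, p a = 1

/-- A discrete memoryless channel: a stochastic matrix. -/
def IsDMC {𝒳 𝒴 : Type*} [Fintype 𝒳] [Fintype 𝒴] (W : 𝒳 → 𝒴 → ℝ) : Prop :=
  ∀ x, IsPMF (W x)

/-- Output distribution `pW` induced by input distribution `p`. -/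
noncomputable def outDist {𝒳 𝒴 : Type*} [Fintype 𝒳] [Fintype 𝒴]
    (p : 𝒳 → ℝ) (W : 𝒳 → 𝒴 → ℝ) : 𝒴 → ℝ :=
  fun y => ∑ x, p x * W x y

/-- Capacity of a DMC: `C = max_p ∑_x p(x) D(W(·|x) ‖ pW)`. -/
noncomputable def capacity {𝒳 𝒴 : Type*} [Fintype 𝒳] [Fintype 𝒴]
    (W : 𝒳 → 𝒴 → ℝ) : ℝ :=
  sSup { r | ∃ p : 𝒳 → ℝ, IsPMF p ∧ r = ∑ x, p x * dKL (W x) (outDist p W) }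

/-- The blocklength-`n` memoryless extension of `W`: `P_{Y^n|X^n=x}(y) = ∏ᵢ W(yᵢ|xᵢ)`. -/
noncomputable def prodW {𝒳 𝒴 : Type*} [Fintype 𝒳] [Fintype 𝒴]
    (W : 𝒳 → 𝒴 → ℝ) (n : ℕ) : (Fin n → 𝒳) → (Fin n → 𝒴) → ℝ :=
  fun x y => ∏ i, W (x i) (y i)

/-- Output pmf `P_{Y^n}` induced by the codebook `c` (uniform messages). -/
noncomputable def codeOut {𝒳 𝒴 : Type*} [Fintype 𝒳] [Fintype 𝒴]
    (W : 𝒳 → 𝒴 → ℝ) {n M : ℕ} (c : Fin M → Fin n → 𝒳) : (Fin n → 𝒴) → ℝ :=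
  fun y => (M : ℝ)⁻¹ * ∑ j, prodW W n (c j) y

/-- Joint pmf `P_{X^n Y^n}` of a uniformly chosen codeword and the channel output. -/
noncomputable def codeJoint {𝒳 𝒴 : Type*} [Fintype 𝒳] [Fintype 𝒴] [DecidableEq 𝒳]
    (W : 𝒳 → 𝒴 → ℝ) {n M : ℕ} (c : Fin M → Fin n → 𝒳) :
    (Fin n → 𝒳) × (Fin n → 𝒴) → ℝ :=
  fun z => (M : ℝ)⁻¹ * ∑ j, if c j = z.1 then prodW W n (c j) z.2 else 0

/-- Input pmf `P_{X^n}` of a uniformly chosen codeword. -/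
noncomputable def codeIn {𝒳 : Type*} [Fintype 𝒳] [DecidableEq 𝒳]
    {n M : ℕ} (c : Fin M → Fin n → 𝒳) : (Fin n → 𝒳) → ℝ :=
  fun x => (M : ℝ)⁻¹ * ∑ j, if c j = x then (1 : ℝ) else 0

open Filter Topology Real

section Divergence

variable {α β : Type*} [Fintype α] [Fintype β]

lemma IsPMF.le_one {p : α → ℝ} (hp : IsPMF p) (a : α) : p a ≤ 1 :=
  hp.2 ▸ Finset.single_le_sum (fun b _ => hp.1 b) (Finset.mem_univ a)

lemma sub_le_mul_log_div {p q : ℝ} (hp : 0 ≤ p) (hq : 0 ≤ q) (hpq : 0 < p → 0 < q) :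
    p - q ≤ p * log (p / q) := by
  rcases hp.eq_or_lt with rfl | hp
  · simpa using hq
  have hlog := one_sub_inv_le_log_of_pos (div_pos hp (hpq hp))
  rw [inv_div] at hlog
  calc p - q = p * (1 - q / p) := by field_simp
    _ ≤ p * log (p / q) := mul_le_mul_of_nonneg_left hlog hp.le

theorem dKL_nonneg {p q : α → ℝ} (hp : IsPMF p) (hq : ∀ a, 0 ≤ q a) (hq1 : ∑ a, q a ≤ 1)
    (hpq : ∀ a, 0 < p a → 0 < q a) : 0 ≤ dKL p q := by
  have h := Finset.sum_le_sum fun a (_ : a ∈ Finset.univ) =>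
    sub_le_mul_log_div (hp.1 a) (hq a) (hpq a)
  rw [Finset.sum_sub_distrib, hp.2] at h
  exact (sub_nonneg.2 hq1).trans h

lemma dKL_uniform_le_log_card {p : α → ℝ} (hp : IsPMF p) :
    dKL p (fun _ => (Fintype.card α : ℝ)⁻¹) ≤ log (Fintype.card α) := by
  calc dKL p (fun _ => (Fintype.card α : ℝ)⁻¹) ≤ ∑ a, p a * log (Fintype.card α) := by
        refine Finset.sum_le_sum fun a _ => ?_
        rcases (hp.1 a).eq_or_lt with h | h
        · simp [← h]
        have hN : (0 : ℝ) < Fintype.card α := by exact_mod_cast Fintype.card_pos_iff.2 ⟨a⟩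
        refine mul_le_mul_of_nonneg_left (log_le_log (by positivity) ?_) h.le
        rw [div_inv_eq_mul]
        exact mul_le_of_le_one_left hN.le (hp.le_one a)
    _ = log (Fintype.card α) := by rw [← Finset.sum_mul, hp.2, one_mul]

theorem dKL_joint (p : α → ℝ) (V : α → β → ℝ) (P : β → ℝ) :
    dKL (fun z : α × β => p z.1 * V z.1 z.2) (fun z => p z.1 * P z.2)
      = ∑ x, p x * dKL (V x) P := by
  rw [dKL, Fintype.sum_prod_type]
  refine Finset.sum_congr rfl fun x _ => ?_
  rw [dKL, Finset.mul_sum]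
  refine Finset.sum_congr rfl fun b _ => ?_
  rcases eq_or_ne (p x) 0 with h | h
  · simp [h]
  · rw [mul_div_mul_left _ _ h]; ring

end Divergence

section Channel

variable {𝒳 𝒴 : Type*} [Fintype 𝒳] [Fintype 𝒴] {p : 𝒳 → ℝ} {V : 𝒳 → 𝒴 → ℝ}

lemma le_outDist (hp : ∀ x, 0 ≤ p x) (hV : ∀ x b, 0 ≤ V x b) (x : 𝒳) (b : 𝒴) :
    p x * V x b ≤ outDist p V b :=
  Finset.single_le_sum (fun x' _ => mul_nonneg (hp x') (hV x' b)) (Finset.mem_univ x)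

lemma outDist_isPMF (hV : IsDMC V) (hp : IsPMF p) : IsPMF (outDist p V) := by
  refine ⟨fun b => Finset.sum_nonneg fun x _ => mul_nonneg (hp.1 x) ((hV x).1 b), ?_⟩
  simp only [outDist]
  rw [Finset.sum_comm]
  simp [← Finset.mul_sum, (hV _).2, hp.2]

theorem sum_mul_dKL_eq_add_dKL_outDist (hp : ∀ x, 0 ≤ p x) (hV : ∀ x b, 0 ≤ V x b)
    {R : 𝒴 → ℝ} (hR : ∀ x b, 0 < p x → 0 < V x b → 0 < R b) :
    ∑ x, p x * dKL (V x) R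
      = ∑ x, p x * dKL (V x) (outDist p V) + dKL (outDist p V) R := by
  set P := outDist p V
  have key : ∀ x b, p x * (V x b * log (V x b / R b))
      = p x * (V x b * log (V x b / P b)) + p x * V x b * log (P b / R b) := by
    intro x b
    rcases (hp x).eq_or_lt with h | hpx
    · simp [← h]
    rcases (hV x b).eq_or_lt with h | hVxb
    · simp [← h]
    have hP : 0 < P b := (mul_pos hpx hVxb).trans_le (le_outDist hp hV x b)
    have hRb := hR x b hpx hVxb
    rw [log_div hVxb.ne' hRb.ne', log_div hVxb.ne' hP.ne', log_div hP.ne' hRb.ne']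
    ring
  simp only [dKL, Finset.mul_sum, key, Finset.sum_add_distrib]
  congr 1
  rw [Finset.sum_comm]
  simp only [← Finset.sum_mul]
  rfl

lemma isPMF_mix [DecidableEq 𝒳] (hp : IsPMF p) (a : 𝒳) {t : ℝ} (ht0 : 0 ≤ t) (ht1 : t ≤ 1) :
    IsPMF (fun x => (1 - t) * p x + t * if x = a then 1 else 0) := by
  refine ⟨fun x => ?_, ?_⟩
  · have := hp.1 x
    dsimp only
    split_ifs <;> nlinarith
  · simp [Finset.sum_add_distrib, ← Finset.mul_sum, hp.2]

lemma sum_mix_mul [DecidableEq 𝒳] (p f : 𝒳 → ℝ) (a : 𝒳) (t : ℝ) :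
    ∑ x, ((1 - t) * p x + t * if x = a then 1 else 0) * f x
      = (1 - t) * ∑ x, p x * f x + t * f a := by
  simp [add_mul, Finset.sum_add_distrib, Finset.mul_sum, mul_assoc]

end Channel

section Capacity

variable {𝒳 𝒴 : Type*} [Fintype 𝒳] [Fintype 𝒴] {W : 𝒳 → 𝒴 → ℝ} {p : 𝒳 → ℝ}

lemma mutualInfo_le_log_card (hW : IsDMC W) (hp : IsPMF p) :
    ∑ x, p x * dKL (W x) (outDist p W) ≤ log (Fintype.card 𝒴) := by
  set u : 𝒴 → ℝ := fun _ => (Fintype.card 𝒴 : ℝ)⁻¹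
  have hu : ∀ b, 0 < u b := fun b => inv_pos.2 (by exact_mod_cast Fintype.card_pos_iff.2 ⟨b⟩)
  have hgolden := sum_mul_dKL_eq_add_dKL_outDist hp.1 (fun x => (hW x).1) fun _ b _ _ => hu b
  have hgibbs : 0 ≤ dKL (outDist p W) u :=
    dKL_nonneg (outDist_isPMF hW hp) (fun b => (hu b).le)
      (by simp [u, mul_inv_le_one]) fun b _ => hu b
  have hbound : ∑ x, p x * dKL (W x) u ≤ log (Fintype.card 𝒴) :=
    calc ∑ x, p x * dKL (W x) u ≤ ∑ x, p x * log (Fintype.card 𝒴) :=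
          Finset.sum_le_sum fun x _ =>
            mul_le_mul_of_nonneg_left (dKL_uniform_le_log_card (hW x)) (hp.1 x)
      _ = log (Fintype.card 𝒴) := by rw [← Finset.sum_mul, hp.2, one_mul]
  linarith

lemma mutualInfo_le_capacity (hW : IsDMC W) (hp : IsPMF p) :
    ∑ x, p x * dKL (W x) (outDist p W) ≤ capacity W :=
  le_csSup ⟨log (Fintype.card 𝒴), by rintro r ⟨p', hp', rfl⟩; exact mutualInfo_le_log_card hW hp'⟩
    ⟨p, hp, rfl⟩

theorem dKL_mix_le_capacity (hW : IsDMC W) (hp : IsPMF p)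
    (hach : ∑ x, p x * dKL (W x) (outDist p W) = capacity W) (a : 𝒳) {t : ℝ} (ht0 : 0 < t)
    (ht1 : t < 1) :
    dKL (W a) (fun b => (1 - t) * outDist p W b + t * W a b) ≤ capacity W := by
  classical
  set Q := outDist p W
  set Qt : 𝒴 → ℝ := fun b => (1 - t) * Q b + t * W a b
  set pt : 𝒳 → ℝ := fun x => (1 - t) * p x + t * if x = a then 1 else 0
  have hpt : IsPMF pt := isPMF_mix hp a ht0.le ht1.le
  have hout : outDist pt W = Qt := funext fun b => sum_mix_mul p (fun x => W x b) a t
  have hQt : IsPMF Qt := hout ▸ outDist_isPMF hW hpt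
  have hQt_pos : ∀ b, 0 < Q b → 0 < Qt b := fun b hb => by
    have := (hW a).1 b
    simp only [Qt]
    nlinarith
  have hgolden := sum_mul_dKL_eq_add_dKL_outDist hp.1 (fun x => (hW x).1) (R := Qt)
    fun x b hpx hWxb =>
      hQt_pos b ((mul_pos hpx hWxb).trans_le (le_outDist hp.1 (fun x => (hW x).1) x b))
  have hgibbs : 0 ≤ dKL Q Qt := dKL_nonneg (outDist_isPMF hW hp) hQt.1 hQt.2.le hQt_pos
  have hle := mutualInfo_le_capacity hW hpt
  rw [hout, sum_mix_mul, hgolden, hach] at hle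
  have : t * dKL (W a) Qt ≤ t * capacity W := by
    nlinarith [mul_nonneg (sub_nonneg.2 ht1.le) hgibbs]
  exact le_of_mul_le_mul_left this ht0

theorem outDist_pos_of_pos (hW : IsDMC W) (hp : IsPMF p)
    (hach : ∑ x, p x * dKL (W x) (outDist p W) = capacity W) {a : 𝒳} {b₀ : 𝒴}
    (hab : 0 < W a b₀) : 0 < outDist p W b₀ := by
  by_contra hQ
  set Q := outDist p W
  have hQb₀ : Q b₀ = 0 := le_antisymm (not_lt.1 hQ) ((outDist_isPMF hW hp).1 b₀)
  set w := W a b₀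
  set C := capacity W
  set t := min (1 / 2 : ℝ) (exp (-(C / w + 2)))
  have ht0 : 0 < t := lt_min (by norm_num) (exp_pos _)
  have ht1 : t < 1 := (min_le_left _ _).trans_lt (by norm_num)
  set Qt : 𝒴 → ℝ := fun b => (1 - t) * Q b + t * W a b
  have hQt : ∀ b, 0 ≤ Qt b := fun b => by
    have := (hW a).1 b
    have := (outDist_isPMF hW hp).1 b
    simp only [Qt]
    nlinarith
  have hsum : ∑ b, (W a b - Qt b) = 0 := by
    have hQ1 : ∑ b, Q b = 1 := (outDist_isPMF hW hp).2
    simp only [Qt, Finset.sum_sub_distrib, Finset.sum_add_distrib, ← Finset.mul_sum, (hW a).2, hQ1]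
    ring
  have hexcess : ∀ b, 0 ≤ W a b * log (W a b / Qt b) - (W a b - Qt b) := fun b =>
    sub_nonneg.2 (sub_le_mul_log_div ((hW a).1 b) (hQt b) fun h => by
      have := (outDist_isPMF hW hp).1 b
      simp only [Qt]
      nlinarith [mul_pos ht0 h])
  -- the mixture puts mass only `t * w` on `b₀`, which costs `w * log (1 / t)` in divergence
  have hlow : -(w * log t) - w ≤ dKL (W a) Qt := by
    have h := Finset.single_le_sum (fun b _ => hexcess b) (Finset.mem_univ b₀)
    rw [Finset.sum_sub_distrib, hsum, sub_zero] at h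
    have hQtb₀ : Qt b₀ = t * w := by simp [Qt, hQb₀, w]
    rw [hQtb₀, log_div hab.ne' (mul_pos ht0 hab).ne', log_mul ht0.ne' hab.ne'] at h
    have : 0 ≤ t * w := (mul_pos ht0 hab).le
    unfold dKL
    linarith
  have hup := dKL_mix_le_capacity hW hp hach a ht0 ht1
  have hlog : log t ≤ -(C / w + 2) := (log_le_iff_le_exp ht0).2 (min_le_right _ _)
  have : C + 2 * w ≤ -(w * log t) := by
    have := mul_le_mul_of_nonneg_left hlog hab.le
    rw [mul_neg, mul_add, mul_div_cancel₀ _ hab.ne'] at this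
    linarith
  linarith

theorem dKL_le_capacity (hW : IsDMC W) (hp : IsPMF p)
    (hach : ∑ x, p x * dKL (W x) (outDist p W) = capacity W) (a : 𝒳) :
    dKL (W a) (outDist p W) ≤ capacity W := by
  set Q := outDist p W
  have hlim : Tendsto (fun t : ℝ => dKL (W a) (fun b => (1 - t) * Q b + t * W a b)) (𝓝 0)
      (𝓝 (dKL (W a) Q)) := by
    simp only [dKL]
    refine tendsto_finsetSum _ fun b _ => ?_
    rcases ((hW a).1 b).eq_or_lt with h | h
    · simp [← h]
    have hQb : (1 - 0) * Q b + 0 * W a b ≠ 0 := by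
      simpa using (outDist_pos_of_pos hW hp hach h).ne'
    have hden : ContinuousAt (fun t : ℝ => (1 - t) * Q b + t * W a b) 0 := by fun_prop
    have hc : ContinuousAt (fun t : ℝ => W a b * log (W a b / ((1 - t) * Q b + t * W a b))) 0 :=
      continuousAt_const.mul ((continuousAt_const.div hden hQb).log (div_ne_zero h.ne' hQb))
    simpa using hc.tendsto
  refine le_of_tendsto (hlim.mono_left (nhdsWithin_le_nhds (s := Set.Ioi 0))) ?_
  filter_upwards [Ioo_mem_nhdsGT one_pos] with t ht
  exact dKL_mix_le_capacity hW hp hach a ht.1 ht.2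

end Capacity

section Product

variable {ι β : Type*} [Fintype ι] [DecidableEq ι] [Fintype β] {P : ι → β → ℝ}

lemma sum_prod_mul_prod (P φ : ι → β → ℝ) :
    ∑ y : ι → β, (∏ i, P i (y i)) * ∏ i, φ i (y i) = ∏ i, ∑ b, P i b * φ i b := by
  rw [Fintype.prod_sum]
  simp only [Finset.prod_mul_distrib]

lemma sum_prod_mul_apply (hP : ∀ i, ∑ b, P i b = 1) (k : ι) (F : β → ℝ) :
    ∑ y : ι → β, (∏ i, P i (y i)) * F (y k) = ∑ b, P k b * F b := by
  have h := sum_prod_mul_prod P fun i b => if i = k then F b else 1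
  simp only [Finset.prod_ite_eq', Finset.mem_univ, if_true] at h
  rw [h, Fintype.prod_eq_single k fun i hik => by simp [hik, hP i]]
  simp

lemma sum_prod_mul_apply_mul_apply (hP : ∀ i, ∑ b, P i b = 1) {k l : ι} (hkl : k ≠ l)
    (F G : β → ℝ) :
    ∑ y : ι → β, (∏ i, P i (y i)) * (F (y k) * G (y l))
      = (∑ b, P k b * F b) * ∑ b, P l b * G b := by
  have h := sum_prod_mul_prod P fun i b => (if i = k then F b else 1) * (if i = l then G b else 1)
  simp only [Finset.prod_mul_distrib, Finset.prod_ite_eq', Finset.mem_univ, if_true] at h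
  rw [h, Fintype.prod_eq_mul k l hkl fun i hi => by simp [hi.1, hi.2, hP i]]
  simp [hkl, hkl.symm]

lemma sum_prod_mul_sum_sq (hP : ∀ i, ∑ b, P i b = 1) (F : ι → β → ℝ)
    (hF : ∀ i, ∑ b, P i b * F i b = 0) :
    ∑ y : ι → β, (∏ i, P i (y i)) * (∑ i, F i (y i)) ^ 2 = ∑ i, ∑ b, P i b * F i b ^ 2 := by
  simp_rw [sq, Finset.sum_mul_sum, Finset.mul_sum]
  rw [Finset.sum_comm]
  refine Finset.sum_congr rfl fun i _ => ?_
  rw [Finset.sum_comm, Finset.sum_eq_single i]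
  · exact sum_prod_mul_apply hP i fun b => F i b * F i b
  · intro l _ hli
    rw [sum_prod_mul_apply_mul_apply hP hli.symm, hF, zero_mul]
  · simp

theorem dKL_pi {Q : ι → β → ℝ} (hP : ∀ i, IsPMF (P i)) (hPQ : ∀ i b, 0 < P i b → 0 < Q i b) :
    dKL (fun y : ι → β => ∏ i, P i (y i)) (fun y => ∏ i, Q i (y i)) = ∑ i, dKL (P i) (Q i) := by
  have key : ∀ y : ι → β, (∏ i, P i (y i)) * log ((∏ i, P i (y i)) / ∏ i, Q i (y i))
      = (∏ i, P i (y i)) * ∑ i, log (P i (y i) / Q i (y i)) := by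
    intro y
    by_cases hy : ∀ i, 0 < P i (y i)
    · rw [← Finset.prod_div_distrib,
        log_prod fun i _ => (div_pos (hy i) (hPQ i _ (hy i))).ne']
    · obtain ⟨i, hi⟩ := not_forall.1 hy
      rw [Finset.prod_eq_zero (Finset.mem_univ i) (le_antisymm (not_lt.1 hi) ((hP i).1 _))]
      simp
  simp only [dKL, key, Finset.mul_sum]
  rw [Finset.sum_comm]
  exact Finset.sum_congr rfl fun i _ =>
    sum_prod_mul_apply (fun i => (hP i).2) i fun b => log (P i b / Q i b)

end Product

section Code

variable {𝒳 𝒴 : Type*} [Fintype 𝒳] [Fintype 𝒴] {W : 𝒳 → 𝒴 → ℝ} {n M : ℕ}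

lemma prodW_isDMC (hW : IsDMC W) (n : ℕ) : IsDMC (prodW W n) := fun x =>
  ⟨fun _ => Finset.prod_nonneg fun i _ => (hW (x i)).1 _, by
    simp [prodW, ← Fintype.prod_sum, (hW _).2]⟩

lemma pos_of_prodW_pos (hW : IsDMC W) {x : Fin n → 𝒳} {y : Fin n → 𝒴}
    (h : 0 < prodW W n x y) (i : Fin n) : 0 < W (x i) (y i) :=
  ((hW (x i)).1 (y i)).lt_of_ne fun h0 => h.ne' (Finset.prod_eq_zero (Finset.mem_univ i) h0.symm)

variable [DecidableEq 𝒳]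

lemma codeIn_nonneg (c : Fin M → Fin n → 𝒳) (x : Fin n → 𝒳) : 0 ≤ codeIn c x :=
  mul_nonneg (by positivity) (Finset.sum_nonneg fun j _ => by split_ifs <;> norm_num)

lemma sum_codeIn_mul (c : Fin M → Fin n → 𝒳) (f : (Fin n → 𝒳) → ℝ) :
    ∑ x, codeIn c x * f x = (M : ℝ)⁻¹ * ∑ j, f (c j) := by
  simp only [codeIn, mul_assoc, ← Finset.mul_sum, Finset.sum_mul, ite_mul, one_mul, zero_mul]
  rw [Finset.sum_comm]
  simp

lemma codeOut_eq_outDist (c : Fin M → Fin n → 𝒳) :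
    codeOut W c = outDist (codeIn c) (prodW W n) :=
  funext fun y => (sum_codeIn_mul c fun x => prodW W n x y).symm

lemma codeJoint_eq (c : Fin M → Fin n → 𝒳) :
    codeJoint W c = fun z => codeIn c z.1 * prodW W n z.1 z.2 := by
  funext z
  simp only [codeJoint, codeIn, mul_assoc, Finset.sum_mul, ite_mul, one_mul, zero_mul]
  congr 1
  refine Finset.sum_congr rfl fun j _ => ?_
  split_ifs with h <;> simp [h]

theorem avg_sum_dKL_eq_mutualInfo_add (hW : IsDMC W) {Q : 𝒴 → ℝ}
    (hQ : ∀ a b, 0 < W a b → 0 < Q b) (c : Fin M → Fin n → 𝒳) :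
    (M : ℝ)⁻¹ * ∑ j, ∑ i, dKL (W (c j i)) Q
      = dKL (codeJoint W c) (fun z => codeIn c z.1 * codeOut W c z.2)
        + dKL (codeOut W c) (fun y => ∏ i, Q (y i)) := by
  have hpi : ∀ x : Fin n → 𝒳, dKL (prodW W n x) (fun y => ∏ i, Q (y i)) = ∑ i, dKL (W (x i)) Q :=
    fun x => dKL_pi (fun i => hW (x i)) fun i b => hQ _ b
  rw [codeJoint_eq, codeOut_eq_outDist, dKL_joint,
    ← sum_mul_dKL_eq_add_dKL_outDist (codeIn_nonneg c) (fun x => (prodW_isDMC hW n x).1)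
      fun x y _ hxy => Finset.prod_pos fun i _ => hQ _ _ (pos_of_prodW_pos hW hxy i)]
  simp only [hpi, sum_codeIn_mul]

end Code

section Converse

lemma sum_filter_lt_le_div_sq {β : Type*} [Fintype β] {P f : β → ℝ} (hP : ∀ y, 0 ≤ P y) (m : ℝ)
    {r : ℝ} (hr : 0 < r) :
    ∑ y ∈ Finset.univ.filter (fun y => m + r < f y), P y ≤ (∑ y, P y * (f y - m) ^ 2) / r ^ 2 := by
  rw [Finset.sum_div]
  calc ∑ y ∈ Finset.univ.filter (fun y => m + r < f y), P y
      ≤ ∑ y ∈ Finset.univ.filter (fun y => m + r < f y), P y * (f y - m) ^ 2 / r ^ 2 := by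
        refine Finset.sum_le_sum fun y hy => ?_
        have hfy := (Finset.mem_filter.1 hy).2
        rw [le_div_iff₀ (by positivity)]
        exact mul_le_mul_of_nonneg_left (pow_le_pow_left₀ hr.le (by linarith) 2) (hP y)
    _ ≤ ∑ y, P y * (f y - m) ^ 2 / r ^ 2 :=
        Finset.sum_le_sum_of_subset_of_nonneg (Finset.filter_subset _ _)
          fun y _ _ => by have := hP y; positivity

lemma exp_neg_mul_sub_le_sum_mul {β : Type*} [Fintype β] {P R f g : β → ℝ} {γ : ℝ}
    (hP : ∀ y, 0 ≤ P y) (hR : ∀ y, 0 ≤ R y) (hg0 : ∀ y, 0 ≤ g y) (hg1 : ∀ y, g y ≤ 1)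
    (hPR : ∀ y, f y ≤ γ → exp (-γ) * P y ≤ R y) :
    exp (-γ) * (∑ y, P y * g y - ∑ y ∈ Finset.univ.filter (fun y => γ < f y), P y)
      ≤ ∑ y, R y * g y := by
  set bad := Finset.univ.filter (fun y => γ < f y)
  set good := Finset.univ.filter (fun y => ¬γ < f y)
  have hsplit := Finset.sum_filter_add_sum_filter_not Finset.univ (fun y => γ < f y)
    fun y => P y * g y
  have hbad : ∑ y ∈ bad, P y * g y ≤ ∑ y ∈ bad, P y :=
    Finset.sum_le_sum fun y _ => mul_le_of_le_one_right (hP y) (hg1 y)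
  have hgood : exp (-γ) * ∑ y ∈ good, P y * g y ≤ ∑ y ∈ good, R y * g y := by
    rw [Finset.mul_sum]
    refine Finset.sum_le_sum fun y hy => ?_
    rw [← mul_assoc]
    exact mul_le_mul_of_nonneg_right (hPR y (not_lt.1 (Finset.mem_filter.1 hy).2)) (hg0 y)
  calc exp (-γ) * (∑ y, P y * g y - ∑ y ∈ bad, P y)
      ≤ exp (-γ) * ∑ y ∈ good, P y * g y :=
        mul_le_mul_of_nonneg_left (by linarith) (exp_pos _).le
    _ ≤ ∑ y ∈ good, R y * g y := hgood
    _ ≤ ∑ y, R y * g y :=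
        Finset.sum_le_sum_of_subset_of_nonneg (Finset.filter_subset _ _)
          fun y _ _ => mul_nonneg (hR y) (hg0 y)

lemma log_card_sub_le_avg {ι : Type*} [Fintype ι] [Nonempty ι] (S : ι → ℝ) {K : ℝ}
    (h : ∑ j, exp (-S j) ≤ exp K) :
    log (Fintype.card ι) - K ≤ (Fintype.card ι : ℝ)⁻¹ * ∑ j, S j := by
  set N : ℝ := (Fintype.card ι : ℝ)
  have hN : 0 < N := by simp [N, Fintype.card_pos]
  have hjensen := convexOn_exp.map_sum_le (t := Finset.univ) (w := fun _ => N⁻¹)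
    (p := fun j => -S j) (fun _ _ => by positivity) (by simp [N]) fun _ _ => Set.mem_univ _
  simp only [smul_eq_mul, ← Finset.mul_sum, Finset.sum_neg_distrib] at hjensen
  have : exp (N⁻¹ * -∑ j, S j) ≤ exp (K - log N) := by
    rw [exp_sub, exp_log hN, div_eq_inv_mul]
    exact hjensen.trans (mul_le_mul_of_nonneg_left h (by positivity))
  have := exp_le_exp.1 this
  linarith

variable {𝒳 𝒴 : Type*} [Fintype 𝒳] [Fintype 𝒴] {W : 𝒳 → 𝒴 → ℝ} {Q : 𝒴 → ℝ} {n M : ℕ}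

noncomputable def infoDensity (W : 𝒳 → 𝒴 → ℝ) (Q : 𝒴 → ℝ) {n : ℕ} (x : Fin n → 𝒳)
    (y : Fin n → 𝒴) : ℝ :=
  ∑ i, log (W (x i) (y i) / Q (y i))

noncomputable def infoVar (W : 𝒳 → 𝒴 → ℝ) (Q : 𝒴 → ℝ) (a : 𝒳) : ℝ :=
  ∑ b, W a b * (log (W a b / Q b) - dKL (W a) Q) ^ 2

lemma infoVar_nonneg (hW : IsDMC W) (a : 𝒳) : 0 ≤ infoVar W Q a :=
  Finset.sum_nonneg fun b _ => mul_nonneg ((hW a).1 b) (sq_nonneg _)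

lemma prod_eq_prodW_mul_exp_neg_infoDensity (hW : IsDMC W) (hQ : ∀ a b, 0 < W a b → 0 < Q b)
    {x : Fin n → 𝒳} {y : Fin n → 𝒴} (h : 0 < prodW W n x y) :
    ∏ i, Q (y i) = prodW W n x y * exp (-infoDensity W Q x y) := by
  rw [infoDensity, ← Finset.sum_neg_distrib, exp_sum, prodW, ← Finset.prod_mul_distrib]
  refine Finset.prod_congr rfl fun i _ => ?_
  have hWi := pos_of_prodW_pos hW h i
  rw [exp_neg, exp_log (div_pos hWi (hQ _ _ hWi))]
  field_simp

lemma sum_prodW_mul_infoDensity_sub_sq_le (hW : IsDMC W) (x : Fin n → 𝒳) :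
    ∑ y, prodW W n x y * (infoDensity W Q x y - ∑ i, dKL (W (x i)) Q) ^ 2
      ≤ n * ∑ a, infoVar W Q a := by
  have hmean : ∀ i, ∑ b, W (x i) b * (log (W (x i) b / Q b) - dKL (W (x i)) Q) = 0 := by
    intro i
    simp only [mul_sub, Finset.sum_sub_distrib, ← Finset.sum_mul, (hW (x i)).2, one_mul]
    exact sub_self _
  simp only [prodW, infoDensity, ← Finset.sum_sub_distrib]
  rw [sum_prod_mul_sum_sq (fun i => (hW (x i)).2) _ hmean]
  calc ∑ i, infoVar W Q (x i) ≤ ∑ _i : Fin n, ∑ a, infoVar W Q a :=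
        Finset.sum_le_sum fun i _ => Finset.single_le_sum (fun a _ => infoVar_nonneg hW a)
          (Finset.mem_univ (x i))
    _ = n * ∑ a, infoVar W Q a := by simp

theorem exp_neg_mul_le_sum_prod_mul (hW : IsDMC W) (hQ0 : ∀ b, 0 ≤ Q b)
    (hQ : ∀ a b, 0 < W a b → 0 < Q b) (x : Fin n → 𝒳) {g : (Fin n → 𝒴) → ℝ}
    (hg0 : ∀ y, 0 ≤ g y) (hg1 : ∀ y, g y ≤ 1) {r : ℝ} (hr : 0 < r) :
    exp (-(∑ i, dKL (W (x i)) Q + r))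
        * (∑ y, prodW W n x y * g y - n * (∑ a, infoVar W Q a) / r ^ 2)
      ≤ ∑ y, (∏ i, Q (y i)) * g y := by
  have hP := (prodW_isDMC hW n x).1
  refine le_trans ?_ (exp_neg_mul_sub_le_sum_mul (f := infoDensity W Q x)
    (γ := ∑ i, dKL (W (x i)) Q + r) hP (fun y => Finset.prod_nonneg fun i _ => hQ0 _) hg0 hg1
    fun y hy => ?_)
  · have hcheb := (sum_filter_lt_le_div_sq hP (∑ i, dKL (W (x i)) Q) hr).trans
      (div_le_div_of_nonneg_right (sum_prodW_mul_infoDensity_sub_sq_le hW x) (sq_nonneg r))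
    gcongr
  · rcases (hP y).eq_or_lt with h | h
    · rw [← h, mul_zero]
      exact Finset.prod_nonneg fun i _ => hQ0 _
    · rw [prod_eq_prodW_mul_exp_neg_infoDensity hW hQ h, mul_comm]
      gcongr

theorem log_card_add_log_sub_le_avg_sum_dKL (hW : IsDMC W) (hQ : IsPMF Q)
    (hsupp : ∀ a b, 0 < W a b → 0 < Q b) {ε : ℝ} (hε1 : ε < 1) (hM : 0 < M)
    (c : Fin M → Fin n → 𝒳) (g : (Fin n → 𝒴) → Fin M → ℝ) (hg : ∀ y, IsPMF (g y))
    (herr : ∀ j, ∑ y, prodW W n (c j) y * (1 - g y j) ≤ ε) {r : ℝ} (hr : 0 < r)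
    (hrV : 2 * (n * ∑ a, infoVar W Q a) ≤ (1 - ε) * r ^ 2) :
    log M + log ((1 - ε) / 2) - r ≤ (M : ℝ)⁻¹ * ∑ j, ∑ i, dKL (W (c j i)) Q := by
  set S : Fin M → ℝ := fun j => ∑ i, dKL (W (c j i)) Q
  have hA : 0 < (1 - ε) / 2 := by linarith
  have hcodeword : ∀ j, exp (-(S j + r)) * ((1 - ε) / 2) ≤ ∑ y, (∏ i, Q (y i)) * g y j := by
    intro j
    refine le_trans ?_ (exp_neg_mul_le_sum_prod_mul hW hQ.1 hsupp (c j) (fun y => (hg y).1 j)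
      (fun y => (hg y).le_one j) hr)
    have hsucc : 1 - ε ≤ ∑ y, prodW W n (c j) y * g y j := by
      have := herr j
      simp only [mul_sub, mul_one, Finset.sum_sub_distrib, (prodW_isDMC hW n (c j)).2] at this
      linarith
    have hvar : n * (∑ a, infoVar W Q a) / r ^ 2 ≤ (1 - ε) / 2 := by
      rw [div_le_iff₀ (by positivity)]
      linarith
    gcongr
    linarith
  -- the decoding regions of all codewords partition the output space
  have htotal : ∑ j, ∑ y, (∏ i, Q (y i)) * g y j = 1 := by
    rw [Finset.sum_comm]
    simp only [← Finset.mul_sum, (hg _).2, mul_one]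
    rw [← Fintype.prod_sum]
    simp [hQ.2]
  have hexp : ∑ j, exp (-S j) ≤ exp (r - log ((1 - ε) / 2)) := by
    have h := (Finset.sum_le_sum fun j _ => hcodeword j).trans htotal.le
    simp only [neg_add, exp_add, mul_comm _ (exp (-r)), mul_assoc, ← Finset.mul_sum,
      ← Finset.sum_mul] at h
    rw [exp_sub, exp_log hA, le_div_iff₀ hA]
    rw [exp_neg, inv_mul_le_iff₀ (exp_pos r), mul_one] at h
    exact h
  have : Nonempty (Fin M) := ⟨⟨0, hM⟩⟩
  have := log_card_sub_le_avg S hexp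
  simp only [Fintype.card_fin] at this
  linarith

end Converse

lemma tendsto_sqrt_mul_add_one_div (K : ℝ) :
    Tendsto (fun n : ℕ => (√(K * n) + 1) / n) atTop (𝓝 0) := by
  have hsqrt : Tendsto (fun n : ℕ => (√(n : ℝ))⁻¹) atTop (𝓝 0) :=
    tendsto_inv_atTop_zero.comp (tendsto_sqrt_atTop.comp tendsto_natCast_atTop_atTop)
  have h := (hsqrt.const_mul √K).add tendsto_inv_atTop_nhds_zero_nat
  rw [mul_zero, add_zero] at h
  refine h.congr fun n => ?_
  rw [add_div, sqrt_mul' K n.cast_nonneg, mul_div_assoc, sqrt_div_self', one_div, one_div]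

lemma avg_sum_dKL_le {𝒳 𝒴 : Type*} [Fintype 𝒴] {W : 𝒳 → 𝒴 → ℝ} {Q : 𝒴 → ℝ} {n M : ℕ}
    (hM : 0 < M) {C : ℝ} (hC : ∀ a, dKL (W a) Q ≤ C)
    (c : Fin M → Fin n → 𝒳) :
    (M : ℝ)⁻¹ * ∑ j, ∑ i, dKL (W (c j i)) Q ≤ n * C := by
  have hM' : (M : ℝ) ≠ 0 := by exact_mod_cast hM.ne'
  calc (M : ℝ)⁻¹ * ∑ j, ∑ i, dKL (W (c j i)) Q ≤ (M : ℝ)⁻¹ * ∑ _j : Fin M, n * C := by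
        gcongr with j
        exact (Finset.sum_le_sum fun i _ => hC _).trans (by simp)
    _ = n * C := by simp [hM']

section Asymptotics

variable {𝒳 𝒴 : Type*} [Fintype 𝒳] [Fintype 𝒴] {W : 𝒳 → 𝒴 → ℝ} {p : 𝒳 → ℝ}

theorem tendsto_avg_sum_dKL_div (hW : IsDMC W) (hp : IsPMF p)
    (hach : ∑ x, p x * dKL (W x) (outDist p W) = capacity W) {ε : ℝ} (hε1 : ε < 1)
    {M : ℕ → ℕ} (hM : ∀ n, 0 < M n) (c : ∀ n, Fin (M n) → Fin n → 𝒳)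
    (g : ∀ n, (Fin n → 𝒴) → Fin (M n) → ℝ) (hg : ∀ n y, IsPMF (g n y))
    (herr : ∀ n (j : Fin (M n)), ∑ y, prodW W n (c n j) y * (1 - g n y j) ≤ ε)
    (hcap : Tendsto (fun n => log (M n) / n) atTop (𝓝 (capacity W))) :
    Tendsto (fun n => ((M n : ℝ)⁻¹ * ∑ j, ∑ i, dKL (W (c n j i)) (outDist p W)) / n) atTop
      (𝓝 (capacity W)) := by
  set Q := outDist p W
  set V := ∑ a, infoVar W Q a
  have hV : 0 ≤ V := Finset.sum_nonneg fun a _ => infoVar_nonneg hW a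
  have hsupp : ∀ a b, 0 < W a b → 0 < Q b := fun _ _ h => outDist_pos_of_pos hW hp hach h
  -- a deviation of order `√n` makes Chebyshev's bound at most `(1 - ε) / 2`
  set r : ℕ → ℝ := fun n => √(2 * V / (1 - ε) * n) + 1
  have hrV : ∀ n : ℕ, 2 * (n * V) ≤ (1 - ε) * r n ^ 2 := fun n => by
    have hK : 0 ≤ 2 * V / (1 - ε) * n := by
      have : 0 < 1 - ε := by linarith
      positivity
    have hsq : (1 - ε) * (2 * V / (1 - ε) * n) = 2 * (n * V) := by
      have : 1 - ε ≠ 0 := by linarith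
      field_simp
    nlinarith [sq_sqrt hK, sqrt_nonneg (2 * V / (1 - ε) * n)]
  have hlower : ∀ n, log (M n) + log ((1 - ε) / 2) - r n
      ≤ (M n : ℝ)⁻¹ * ∑ j, ∑ i, dKL (W (c n j i)) Q := fun n =>
    log_card_add_log_sub_le_avg_sum_dKL hW (outDist_isPMF hW hp) hsupp hε1 (hM n) (c n) (g n)
      (hg n) (herr n) (by positivity) (hrV n)
  have hupper : ∀ n, (M n : ℝ)⁻¹ * ∑ j, ∑ i, dKL (W (c n j i)) Q ≤ n * capacity W := fun n =>
    avg_sum_dKL_le (hM n) (dKL_le_capacity hW hp hach) (c n)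
  have hlim : Tendsto (fun n : ℕ => (log (M n) + log ((1 - ε) / 2) - r n) / n) atTop
      (𝓝 (capacity W)) := by
    have h := (hcap.add (tendsto_const_div_atTop_nhds_zero_nat (log ((1 - ε) / 2)))).sub
      (tendsto_sqrt_mul_add_one_div (2 * V / (1 - ε)))
    rw [add_zero, sub_zero] at h
    exact h.congr fun n => by simp only [r, add_div, sub_div]
  refine tendsto_of_tendsto_of_tendsto_of_le_of_le' hlim tendsto_const_nhds
    (Eventually.of_forall fun n => div_le_div_of_nonneg_right (hlower n) n.cast_nonneg) ?_
  filter_upwards [eventually_gt_atTop 0] with n hn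
  rw [div_le_iff₀ (by positivity)]
  linarith [hupper n]

end Asymptotics

theorem mutual_info_iff_output_relEnt_general
    {𝒳 𝒴 : Type*} [Fintype 𝒳] [Fintype 𝒴] [DecidableEq 𝒳]
    (W : 𝒳 → 𝒴 → ℝ) (hW : IsDMC W)
    (pstar : 𝒳 → ℝ) (hpstar : IsPMF pstar)
    (hach : ∑ x, pstar x * dKL (W x) (outDist pstar W) = capacity W)
    (ε : ℝ) (hε1 : ε < 1)
    (M : ℕ → ℕ) (hM : ∀ n, 0 < M n)
    (c : ∀ n, Fin (M n) → Fin n → 𝒳)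
    (g : ∀ n, (Fin n → 𝒴) → Fin (M n) → ℝ)
    (hg : ∀ n y, IsPMF (g n y))
    (herr : ∀ n (j : Fin (M n)), ∑ y, prodW W n (c n j) y * (1 - g n y j) ≤ ε)
    (hcap : Tendsto (fun n => Real.log (M n) / n) atTop (nhds (capacity W))) :
    Tendsto
      (fun n =>
        dKL (codeJoint W (c n))
          (fun z => codeIn (c n) z.1 * codeOut W (c n) z.2) / n)
      atTop (nhds (capacity W))
    ↔ Tendsto
        (fun n =>
          dKL (codeOut W (c n)) (fun y => ∏ i, outDist pstar W (y i)) / n)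
        atTop (nhds 0) := by
  have hsupp : ∀ a b, 0 < W a b → 0 < outDist pstar W b :=
    fun _ _ h => outDist_pos_of_pos hW hpstar hach h
  have hS := tendsto_avg_sum_dKL_div hW hpstar hach hε1 hM c g hg herr hcap
  simp_rw [avg_sum_dKL_eq_mutualInfo_add hW hsupp, add_div] at hS
  constructor
  · intro hI
    simpa using hS.sub hI
  · intro hD
    simpa using hS.sub hD

/-- Theorem 4 of the paper: for a capacity-achieving sequence of
`(n, Mₙ, ε)_{max,det}` codes on a DMC, `(1/n) I(X^n;Y^n) → C` if and only if
`(1/n) D(P_{Y^n} ‖ (P_Y^*)^n) → 0`, where `I(X^n;Y^n) = D(P_{X^nY^n}‖P_{X^n}×P_{Y^n})`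
and `P_Y^*` is the capacity-achieving output distribution. -/
theorem mutual_info_iff_output_relEnt
    {𝒳 𝒴 : Type*} [Fintype 𝒳] [Fintype 𝒴] [DecidableEq 𝒳]
    (W : 𝒳 → 𝒴 → ℝ) (hW : IsDMC W)
    (pstar : 𝒳 → ℝ) (hpstar : IsPMF pstar)
    (hach : ∑ x, pstar x * dKL (W x) (outDist pstar W) = capacity W)
    (ε : ℝ) (hε0 : 0 < ε) (hε1 : ε < 1)
    (M : ℕ → ℕ) (hM : ∀ n, 0 < M n)
    (c : ∀ n, Fin (M n) → Fin n → 𝒳)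
    (g : ∀ n, (Fin n → 𝒴) → Fin (M n) → ℝ)
    (hg : ∀ n y, IsPMF (g n y))
    (herr : ∀ n (j : Fin (M n)), ∑ y, prodW W n (c n j) y * (1 - g n y j) ≤ ε)
    (hcap : Tendsto (fun n => Real.log (M n) / n) atTop (nhds (capacity W))) :
    Tendsto
      (fun n =>
        dKL (codeJoint W (c n))
          (fun z => codeIn (c n) z.1 * codeOut W (c n) z.2) / n)
      atTop (nhds (capacity W))
    ↔ Tendsto
        (fun n =>
          dKL (codeOut W (c n)) (fun y => ∏ i, outDist pstar W (y i)) / n)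
        atTop (nhds 0) :=
  mutual_info_iff_output_relEnt_general W hW pstar hpstar hach ε hε1 M hM c g hg herr hcap
end

section
/- Let P and Q be probability measures on a measurable space with D(P‖Q) < ∞, and let F be a measurable real function that is (b,c)-concentrated with respect to Q and is P-integrable. Then | ∫ F dP − ∫ F dQ | ≤ 2 √( c·D(P‖Q) + c·log b ). -/
open MeasureTheory ProbabilityTheory Filter
open scoped ENNReal NNReal

/-!
Tilting `Q` by `exp g` and applying Gibbs' inequality to `P` against the tilted measure gives
the Donsker–Varadhan bound `∫ g dP ≤ D(P‖Q) + log ∫ exp g dQ`. With `g = t (F − ∫ F dQ)` the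
concentration hypothesis turns this into `t Δ ≤ D(P‖Q) + log b + c t²` for every real `t`,
where `Δ = ∫ F dP − ∫ F dQ`, and the choice `t = Δ / (2c)` yields `Δ² ≤ 4c (D(P‖Q) + log b)`.
-/

/-- Relative entropy (Kullback–Leibler divergence): `∫ log (dP/dQ) dP` when `P ≪ Q`
and the log-likelihood ratio is integrable, and `+∞` otherwise. -/
noncomputable def relEnt {Ω : Type*} [MeasurableSpace Ω] (P Q : Measure Ω) : ℝ≥0∞ :=
  open scoped Classical in
  if P ≪ Q ∧ Integrable (llr P Q) P then ENNReal.ofReal (∫ ω, llr P Q ω ∂P) else ⊤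

/-- `F` is `(b,c)`-concentrated with respect to `μ`:
`∫ exp{t(F − ∫F dμ)} dμ ≤ b exp{c t²}` for every `t ∈ ℝ` (the exponential moments
being finite). -/
def Concentrated {Ω : Type*} [MeasurableSpace Ω] (b c : ℝ) (F : Ω → ℝ)
    (μ : Measure Ω) : Prop :=
  Integrable F μ ∧ ∀ t : ℝ,
    Integrable (fun ω => Real.exp (t * (F ω - ∫ x, F x ∂μ))) μ ∧
    ∫ ω, Real.exp (t * (F ω - ∫ x, F x ∂μ)) ∂μ ≤ b * Real.exp (c * t ^ 2)

open InformationTheory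

section

variable {Ω : Type*} [MeasurableSpace Ω]

lemma relEnt_eq_klDiv (P Q : Measure Ω) [IsProbabilityMeasure P] [IsProbabilityMeasure Q] :
    relEnt P Q = klDiv P Q := by
  by_cases h : P ≪ Q ∧ Integrable (llr P Q) P
  · simp [relEnt, h, klDiv_of_ac_of_integrable h.1 h.2]
  · rw [relEnt, if_neg h, eq_comm, klDiv_eq_top_iff]
    exact fun hPQ hint => h ⟨hPQ, hint⟩

theorem integral_le_integral_llr_add_log_integral_exp
    {P Q : Measure Ω} [IsProbabilityMeasure P] [SigmaFinite Q] {g : Ω → ℝ}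
    (hPQ : P ≪ Q) (h_llr : Integrable (llr P Q) P) (hgP : Integrable g P)
    (hgQ : Integrable (fun ω => Real.exp (g ω)) Q) :
    ∫ ω, g ω ∂P ≤ ∫ ω, llr P Q ω ∂P + Real.log (∫ ω, Real.exp (g ω) ∂Q) := by
  have : NeZero Q := ⟨fun hQ =>
    IsProbabilityMeasure.ne_zero P (Measure.absolutelyContinuous_zero_iff.mp (hQ ▸ hPQ))⟩
  have := isProbabilityMeasure_tilted hgQ
  have gibbs := integral_llr_add_sub_measure_univ_nonneg
    (hPQ.trans (absolutelyContinuous_tilted hgQ)) (integrable_llr_tilted_right hPQ hgP h_llr hgQ)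
  rw [integral_llr_tilted_right hPQ hgP hgQ h_llr] at gibbs
  simp only [probReal_univ] at gibbs
  linarith

lemma Concentrated.log_integral_exp_le {μ : Measure Ω} [NeZero μ] {b c : ℝ} {F : Ω → ℝ}
    (hF : Concentrated b c F μ) (t : ℝ) :
    Real.log (∫ ω, Real.exp (t * (F ω - ∫ x, F x ∂μ)) ∂μ) ≤ Real.log b + c * t ^ 2 := by
  obtain ⟨h_int, h_le⟩ := hF.2 t
  have h_pos := integral_exp_pos h_int
  have hb : 0 < b := pos_of_mul_pos_left (h_pos.trans_le h_le) (Real.exp_pos _).le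
  calc Real.log (∫ ω, Real.exp (t * (F ω - ∫ x, F x ∂μ)) ∂μ)
      ≤ Real.log (b * Real.exp (c * t ^ 2)) := Real.log_le_log h_pos h_le
    _ = Real.log b + c * t ^ 2 := by rw [Real.log_mul hb.ne' (Real.exp_ne_zero _), Real.log_exp]

end

lemma abs_le_two_mul_sqrt_of_forall_mul_le {Δ A c : ℝ} (hc : 0 < c)
    (h : ∀ t : ℝ, t * Δ ≤ A + c * t ^ 2) :
    |Δ| ≤ 2 * Real.sqrt (c * A) := by
  have hsq : Δ ^ 2 ≤ 4 * (c * A) := by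
    have := h (Δ / (2 * c))
    field_simp at this
    nlinarith
  calc |Δ| ≤ Real.sqrt (4 * (c * A)) := Real.abs_le_sqrt hsq
    _ = 2 * Real.sqrt (c * A) := by
      rw [Real.sqrt_mul (by norm_num), show (4 : ℝ) = 2 ^ 2 by norm_num,
        Real.sqrt_sq (by norm_num)]

theorem concentrated_expectation_approx_general
    {Ω : Type*} [MeasurableSpace Ω]
    (P Q : Measure Ω) [IsProbabilityMeasure P] [IsProbabilityMeasure Q]
    (hPQ : relEnt P Q < ⊤)
    (b c : ℝ) (hc : 0 < c)
    (F : Ω → ℝ)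
    (hconc : Concentrated b c F Q)
    (hint : Integrable F P) :
    |∫ ω, F ω ∂P - ∫ ω, F ω ∂Q|
      ≤ 2 * Real.sqrt (c * (relEnt P Q).toReal + c * Real.log b) := by
  rw [relEnt_eq_klDiv] at hPQ ⊢
  obtain ⟨hac, h_llr⟩ := klDiv_ne_top_iff.mp hPQ.ne
  rw [toReal_klDiv_of_measure_eq hac (by simp), ← mul_add]
  refine abs_le_two_mul_sqrt_of_forall_mul_le hc fun t => ?_
  have h_dv := integral_le_integral_llr_add_log_integral_exp
    (g := fun ω => t * (F ω - ∫ x, F x ∂Q)) hac h_llr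
    ((hint.sub (integrable_const _)).const_mul t) (hconc.2 t).1
  rw [integral_const_mul, integral_sub hint (integrable_const _), integral_const,
    probReal_univ, one_smul] at h_dv
  linarith [hconc.log_integral_exp_le t]

/-- Proposition 8 (Donsker–Varadhan approximation): if `F` is `(b,c)`-concentrated
with respect to `Q`, then `|∫ F dP − ∫ F dQ| ≤ 2 √(c D(P‖Q) + c log b)`. -/
theorem concentrated_expectation_approx
    {Ω : Type*} [MeasurableSpace Ω]
    (P Q : Measure Ω) [IsProbabilityMeasure P] [IsProbabilityMeasure Q]
    (hPQ : relEnt P Q < ⊤)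
    (b c : ℝ) (hb : 1 ≤ b) (hc : 0 < c)
    (F : Ω → ℝ) (hF : Measurable F)
    (hconc : Concentrated b c F Q)
    (hint : Integrable F P) :
    |∫ ω, F ω ∂P - ∫ ω, F ω ∂Q|
      ≤ 2 * Real.sqrt (c * (relEnt P Q).toReal + c * Real.log b) :=
  concentrated_expectation_approx_general P Q hPQ b c hc F hconc hint
end

section
/- Let Q be a probability measure on a measurable space 𝒴 and f : 𝒴 → ℝ measurable such that for some θ > 0, m₁ := ∫ exp{θ f} dQ < ∞ and m₂ := ∫ f² dQ < ∞. Then there exists a constant b = b(m₁, m₂, θ) > 0 such that for every n ≥ 16/θ⁴ and every probability measure P on the product space 𝒴^n with D(P ‖ Q^n) < ∞, one has (1/n) Σ_{j=1}^n E_P[f(Y_j)] ≤ E_Q[f] + n^{−3/4} D(P ‖ Q^n) + b·n^{−1/4}, where Y_j denotes the j-th coordinate on 𝒴^n and Q^n is the n-fold product of Q. -/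
/-!
The Donsker–Varadhan inequality (Gibbs' inequality for `P` against `Qⁿ` tilted by `g`), applied
to `g(y) = s ∑ⱼ f(yⱼ)`, whose exponential moment under `Qⁿ` factorizes, gives
`s ∑ⱼ E_P[f(Yⱼ)] ≤ D(P‖Qⁿ) + n log E_Q[e^{s f}]`. For `0 ≤ s ≤ θ/2` the elementary bounds
`e^u ≤ 1 + u + u²(1 + e^u)` and `x² e^{s x} ≤ x² + (8/θ²) e^{θ x}` give
`log E_Q[e^{s f}] ≤ s E_Q[f] + s² (2 m₂ + 8 m₁/θ²)`. Divide by `n s` with `s = n^{-1/4}`, which is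
at most `θ/2` exactly when `n ≥ 16/θ⁴`; then `b = max (2 m₂ + 8 m₁/θ²) 1` works.
-/

open MeasureTheory ProbabilityTheory Filter
open scoped ENNReal NNReal

universe u

open Real InformationTheory

lemma exp_le_one_add_add_sq_mul (u : ℝ) : exp u ≤ 1 + u + u ^ 2 * (1 + exp u) := by
  have hexp_neg : exp u * (1 - u) ≤ 1 := by
    have h := add_one_le_exp (-u)
    rw [exp_neg] at h
    have := mul_le_mul_of_nonneg_left h (exp_pos u).le
    rwa [mul_inv_cancel₀ (exp_ne_zero u), neg_add_eq_sub] at this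
  have hmul : u * (exp u - 1) ≤ u ^ 2 * (1 + exp u) := by
    rcases le_total 0 u with hu | hu
    · nlinarith [mul_le_mul_of_nonneg_left (by linarith : exp u - 1 ≤ u * exp u) hu]
    · nlinarith [mul_le_mul_of_nonneg_left (by linarith [add_one_le_exp u] : 1 - exp u ≤ -u)
        (neg_nonneg.2 hu), mul_nonneg (sq_nonneg u) (exp_pos u).le]
  nlinarith

lemma sq_mul_exp_le_sq_add {θ s : ℝ} (hθ : 0 < θ) (hs₀ : 0 ≤ s) (hs : s ≤ θ / 2) (x : ℝ) :
    x ^ 2 * exp (s * x) ≤ x ^ 2 + 8 / θ ^ 2 * exp (θ * x) := by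
  rcases le_or_gt x 0 with hx | hx
  · have : exp (s * x) ≤ 1 := exp_le_one_iff.2 (mul_nonpos_of_nonneg_of_nonpos hs₀ hx)
    have : 0 ≤ 8 / θ ^ 2 * exp (θ * x) := by positivity
    nlinarith [sq_nonneg x]
  · have hsq : x ^ 2 ≤ 8 / θ ^ 2 * exp (θ * x / 2) := by
      have h := pow_div_factorial_le_exp (θ * x / 2) (by positivity) 2
      norm_num [Nat.factorial] at h
      rw [div_mul_eq_mul_div, le_div_iff₀ (by positivity)]
      nlinarith
    calc x ^ 2 * exp (s * x) ≤ 8 / θ ^ 2 * exp (θ * x / 2) * exp (θ * x / 2) := by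
          gcongr
          nlinarith
      _ = 8 / θ ^ 2 * exp (θ * x) := by rw [mul_assoc, ← exp_add, add_halves]
      _ ≤ x ^ 2 + 8 / θ ^ 2 * exp (θ * x) := le_add_of_nonneg_left (sq_nonneg x)

lemma exp_mul_le_one_add_mul_add_sq_mul {θ s : ℝ} (hθ : 0 < θ) (hs₀ : 0 ≤ s) (hs : s ≤ θ / 2)
    (x : ℝ) : exp (s * x) ≤ 1 + s * x + s ^ 2 * (2 * x ^ 2 + 8 / θ ^ 2 * exp (θ * x)) := by
  have h := exp_le_one_add_add_sq_mul (s * x)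
  have := mul_le_mul_of_nonneg_left (sq_mul_exp_le_sq_add hθ hs₀ hs x) (sq_nonneg s)
  nlinarith

section Moments

variable {Ω : Type*} {mΩ : MeasurableSpace Ω} {μ : Measure Ω} [IsProbabilityMeasure μ]
  {X : Ω → ℝ} {θ s : ℝ}

lemma mgf_le_one_add_mul_add_sq_mul (hX : AEMeasurable X μ) (hθ : 0 < θ) (hs₀ : 0 ≤ s)
    (hs : s ≤ θ / 2) (hexp : Integrable (fun ω ↦ exp (θ * X ω)) μ)
    (hsq : Integrable (fun ω ↦ X ω ^ 2) μ) :
    mgf X μ s ≤ 1 + s * ∫ ω, X ω ∂μ +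
      s ^ 2 * (2 * ∫ ω, X ω ^ 2 ∂μ + 8 / θ ^ 2 * ∫ ω, exp (θ * X ω) ∂μ) := by
  have hint : Integrable X μ :=
    ((memLp_two_iff_integrable_sq hX.aestronglyMeasurable).2 hsq).integrable one_le_two
  have hexp_s : Integrable (fun ω ↦ exp (s * X ω)) μ :=
    integrable_exp_mul_of_le_of_le (by simp) hexp hs₀ (by linarith)
  have hlin : Integrable (fun ω ↦ 1 + s * X ω) μ := (integrable_const 1).add (hint.const_mul s)
  have hquad : Integrable (fun ω ↦ 2 * X ω ^ 2 + 8 / θ ^ 2 * exp (θ * X ω)) μ :=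
    (hsq.const_mul 2).add (hexp.const_mul _)
  calc mgf X μ s
      ≤ ∫ ω, (1 + s * X ω + s ^ 2 * (2 * X ω ^ 2 + 8 / θ ^ 2 * exp (θ * X ω))) ∂μ :=
        integral_mono hexp_s (hlin.add (hquad.const_mul _))
          fun ω ↦ exp_mul_le_one_add_mul_add_sq_mul hθ hs₀ hs (X ω)
    _ = _ := by
        rw [integral_add hlin (hquad.const_mul _), integral_add (integrable_const 1)
          (hint.const_mul s), integral_const_mul, integral_const_mul,
          integral_add (hsq.const_mul 2) (hexp.const_mul _), integral_const_mul,
          integral_const_mul]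
        simp

lemma cgf_le_mul_add_sq_mul (hX : AEMeasurable X μ) (hθ : 0 < θ) (hs₀ : 0 ≤ s)
    (hs : s ≤ θ / 2) (hexp : Integrable (fun ω ↦ exp (θ * X ω)) μ)
    (hsq : Integrable (fun ω ↦ X ω ^ 2) μ) :
    cgf X μ s ≤ s * ∫ ω, X ω ∂μ +
      s ^ 2 * (2 * ∫ ω, X ω ^ 2 ∂μ + 8 / θ ^ 2 * ∫ ω, exp (θ * X ω) ∂μ) := by
  have hpos : 0 < mgf X μ s :=
    mgf_pos (integrable_exp_mul_of_le_of_le (by simp) hexp hs₀ (by linarith))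
  linarith [log_le_sub_one_of_pos hpos, mgf_le_one_add_mul_add_sq_mul hX hθ hs₀ hs hexp hsq,
    show cgf X μ s = log (mgf X μ s) from rfl]

end Moments

section RelativeEntropy

variable {α : Type*} {mα : MeasurableSpace α} {μ ν : Measure α}
  [IsProbabilityMeasure μ] [IsProbabilityMeasure ν]

lemma relEnt_eq_klDiv_s10 : relEnt μ ν = klDiv μ ν := by
  by_cases h : μ ≪ ν ∧ Integrable (llr μ ν) μ
  · rw [relEnt, if_pos h, klDiv_of_ac_of_integrable h.1 h.2]
    simp
  · rw [relEnt, if_neg h, eq_comm, klDiv_eq_top_iff]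
    exact fun hac hint ↦ h ⟨hac, hint⟩

lemma integral_le_toReal_klDiv_add_log_integral_exp (h : klDiv μ ν ≠ ∞) {g : α → ℝ}
    (hgμ : Integrable g μ) (hgν : Integrable (fun x ↦ exp (g x)) ν) :
    ∫ x, g x ∂μ ≤ (klDiv μ ν).toReal + log (∫ x, exp (g x) ∂ν) := by
  obtain ⟨hac, hllr⟩ := klDiv_ne_top_iff.1 h
  have := isProbabilityMeasure_tilted hgν
  have hgibbs : 0 ≤ ∫ x, llr μ (ν.tilted g) x ∂μ := by
    rw [← toReal_klDiv_of_measure_eq (hac.trans (absolutelyContinuous_tilted hgν)) (by simp)]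
    exact ENNReal.toReal_nonneg
  rw [integral_llr_tilted_right hac hgμ hgν hllr] at hgibbs
  rw [toReal_klDiv_of_measure_eq hac (by simp)]
  linarith

end RelativeEntropy

lemma mul_sum_integral_eval_le {ι 𝒴 : Type*} [Fintype ι] {m𝒴 : MeasurableSpace 𝒴}
    {Q : Measure 𝒴} [IsProbabilityMeasure Q] {P : Measure (ι → 𝒴)} [IsProbabilityMeasure P]
    (hPQ : klDiv P (Measure.pi fun _ ↦ Q) ≠ ∞) {X : 𝒴 → ℝ} {t : ℝ}
    (hXP : ∀ i, Integrable (fun y ↦ X (y i)) P) (hXQ : Integrable (fun y ↦ exp (t * X y)) Q) :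
    t * ∑ i, ∫ y, X (y i) ∂P ≤
      (klDiv P (Measure.pi fun _ ↦ Q)).toReal + Fintype.card ι * cgf X Q t := by
  have hexp_sum : (fun y : ι → 𝒴 ↦ exp (∑ i, t * X (y i))) = fun y ↦ ∏ i, exp (t * X (y i)) := by
    simp only [exp_sum]
  have h := integral_le_toReal_klDiv_add_log_integral_exp hPQ
    (integrable_finsetSum _ fun i _ ↦ (hXP i).const_mul t)
    (hexp_sum ▸ Integrable.fintype_prod fun _ ↦ hXQ)
  rw [integral_finsetSum _ fun i _ ↦ (hXP i).const_mul t, hexp_sum,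
    integral_fintype_prod_eq_pow (fun y ↦ exp (t * X y)), log_pow] at h
  simp_rw [integral_const_mul, ← Finset.mul_sum] at h
  exact h

lemma rpow_neg_one_div_four_le {θ x : ℝ} (hθ : 0 < θ) (hx : 16 / θ ^ 4 ≤ x) :
    x ^ (-(1 : ℝ) / 4) ≤ θ / 2 := by
  have hx₀ : 0 < x := (by positivity : (0 : ℝ) < 16 / θ ^ 4).trans_le hx
  have hpow : (x ^ (-(1 : ℝ) / 4)) ^ 4 = x⁻¹ := by
    rw [← rpow_natCast, ← rpow_mul hx₀.le]
    norm_num [rpow_neg_one]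
  rw [← pow_le_pow_iff_left₀ (rpow_nonneg hx₀.le _) (by positivity) four_ne_zero, hpow]
  calc x⁻¹ ≤ (16 / θ ^ 4)⁻¹ := inv_anti₀ (by positivity) hx
    _ = (θ / 2) ^ 4 := by rw [inv_div, div_pow]; norm_num

lemma inv_mul_le_of_rpow_mul_le {n S D m B : ℝ} (hn : 0 < n)
    (h : n ^ (-(1 : ℝ) / 4) * S ≤
      D + n * (n ^ (-(1 : ℝ) / 4) * m + (n ^ (-(1 : ℝ) / 4)) ^ 2 * B)) :
    n⁻¹ * S ≤ m + n ^ (-(3 : ℝ) / 4) * D + B * n ^ (-(1 : ℝ) / 4) := by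
  set s := n ^ (-(1 : ℝ) / 4)
  set c := n ^ (-(3 : ℝ) / 4)
  have hc : c * (n * s) = 1 := by
    calc c * (n * s) = c * n ^ (1 : ℝ) * s := by rw [rpow_one]; ring
      _ = n ^ (-(3 : ℝ) / 4 + 1 + -(1 : ℝ) / 4) := by rw [rpow_add hn, rpow_add hn]
      _ = 1 := by norm_num
  have hcs : c * s = n⁻¹ := eq_inv_of_mul_eq_one_left (by rw [← hc]; ring)
  calc n⁻¹ * S = c * (s * S) := by rw [← mul_assoc, hcs]
    _ ≤ c * (D + n * (s * m + s ^ 2 * B)) := by gcongr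
    _ = m + c * D + B * s := by linear_combination (m + s * B) * hc

/-- Proposition 11 (empirical averages of non-Lipschitz single-letter functions):
if `f` satisfies the one-sided Cramér condition `m₁ = ∫ e^{θf} dQ < ∞` and
`m₂ = ∫ f² dQ < ∞`, then there is a constant `b = b(m₁, m₂, θ) > 0` such that
for all `n ≥ 16/θ⁴` and every probability measure `P` on `𝒴ⁿ` with finite
`D(P‖Qⁿ)`, the empirical average satisfies
`(1/n) ∑ⱼ E_P[f(Yⱼ)] ≤ E_Q[f] + n^{-3/4} D(P‖Qⁿ) + b n^{-1/4}`. -/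
theorem empirical_average_nonLipschitz (θ m₁ m₂ : ℝ) (hθ : 0 < θ) :
    ∃ b : ℝ, 0 < b ∧
      ∀ (𝒴 : Type u) (_ : MeasurableSpace 𝒴) (Q : Measure 𝒴),
        IsProbabilityMeasure Q →
        ∀ f : 𝒴 → ℝ, Measurable f →
          Integrable (fun y => Real.exp (θ * f y)) Q →
          (∫ y, Real.exp (θ * f y) ∂Q) = m₁ →
          Integrable (fun y => f y ^ 2) Q →
          (∫ y, f y ^ 2 ∂Q) = m₂ →
          ∀ n : ℕ, 16 / θ ^ 4 ≤ (n : ℝ) →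
            ∀ P : Measure (Fin n → 𝒴), IsProbabilityMeasure P →
              relEnt P (Measure.pi fun _ : Fin n => Q) < ⊤ →
              (∀ j : Fin n, Integrable (fun y => f (y j)) P) →
              (n : ℝ)⁻¹ * ∑ j : Fin n, ∫ y, f (y j) ∂P
                ≤ (∫ y, f y ∂Q)
                  + (n : ℝ) ^ (-(3 : ℝ) / 4) *
                      (relEnt P (Measure.pi fun _ : Fin n => Q)).toReal
                  + b * (n : ℝ) ^ (-(1 : ℝ) / 4) := by
  refine ⟨max (2 * m₂ + 8 / θ ^ 2 * m₁) 1, lt_max_of_lt_right one_pos, ?_⟩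
  rintro 𝒴 _ Q _ f hf hexp rfl hsq rfl n hn P _ hPQ hfP
  have hn₀ : 0 < (n : ℝ) := (by positivity : (0 : ℝ) < 16 / θ ^ 4).trans_le hn
  have hs₀ : 0 ≤ (n : ℝ) ^ (-(1 : ℝ) / 4) := rpow_nonneg hn₀.le _
  have hsθ := rpow_neg_one_div_four_le hθ hn
  rw [relEnt_eq_klDiv_s10] at hPQ ⊢
  have hsum := mul_sum_integral_eval_le hPQ.ne hfP
    (integrable_exp_mul_of_le_of_le (by simp) hexp hs₀ (by linarith))
  have hcgf := cgf_le_mul_add_sq_mul hf.aemeasurable hθ hs₀ hsθ hexp hsq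
  rw [Fintype.card_fin] at hsum
  refine (inv_mul_le_of_rpow_mul_le hn₀
    (hsum.trans (add_le_add_right (mul_le_mul_of_nonneg_left hcgf hn₀.le) _))).trans ?_
  gcongr
  exact le_max_left _ _
end

section
/- For every θ > 0 and m₁, m₂ ≥ 0 there exists a constant b ≥ 0 (depending only on θ, m₁, m₂) such that: for every probability measure Q and every measurable real function f with ∫ exp{θ f} dQ ≤ m₁ and ∫ f² dQ ≤ m₂, and every t with 0 ≤ t ≤ θ/2, one has log ∫ exp{t f} dQ ≤ t ∫ f dQ + b t². -/
open MeasureTheory ProbabilityTheory Filter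
open scoped ENNReal NNReal

universe u

lemma exp_sub_one_sub_le (x : ℝ) : Real.exp x - 1 - x ≤ x ^ 2 * (1 + Real.exp x) := by
  have h1 : x + 1 ≤ Real.exp x := Real.add_one_le_exp x
  have h2 : -x + 1 ≤ Real.exp (-x) := Real.add_one_le_exp (-x)
  have h3 : Real.exp x * Real.exp (-x) = 1 := by
    rw [← Real.exp_add]; simp
  have h4 := Real.exp_pos x
  have h5 := Real.exp_pos (-x)
  rcases le_or_gt x 0 with hx | hx
  · nlinarith [sq_nonneg x, sq_nonneg (x * Real.exp x)]
  · nlinarith [sq_nonneg x]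

lemma sq_le_four_exp {x : ℝ} (hx : 0 ≤ x) : x ^ 2 ≤ 4 * Real.exp x := by
  have h1 : x / 2 + 1 ≤ Real.exp (x / 2) := Real.add_one_le_exp _
  have h2 : Real.exp (x / 2) * Real.exp (x / 2) = Real.exp x := by
    rw [← Real.exp_add]; ring_nf
  nlinarith [Real.exp_pos (x / 2)]

/-- The moment-generating-function estimate used in Proposition 11 of the paper:
for every `θ > 0` and `m₁, m₂ ≥ 0` there is a constant `b ≥ 0` (depending only on
`θ, m₁, m₂`) such that whenever `∫ e^{θ f} dQ ≤ m₁` and `∫ f² dQ ≤ m₂`, one has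
`log ∫ e^{t f} dQ ≤ t ∫ f dQ + b t²` for all `0 ≤ t ≤ θ/2`. -/
theorem mgf_quadratic_bound (θ m₁ m₂ : ℝ) (hθ : 0 < θ) (hm₁ : 0 ≤ m₁) (hm₂ : 0 ≤ m₂) :
    ∃ b : ℝ, 0 ≤ b ∧
      ∀ (𝒴 : Type u) (_ : MeasurableSpace 𝒴) (Q : Measure 𝒴),
        IsProbabilityMeasure Q →
        ∀ f : 𝒴 → ℝ, Measurable f →
          Integrable (fun y => Real.exp (θ * f y)) Q →
          (∫ y, Real.exp (θ * f y) ∂Q) ≤ m₁ →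
          Integrable (fun y => f y ^ 2) Q →
          (∫ y, f y ^ 2 ∂Q) ≤ m₂ →
          ∀ t : ℝ, 0 ≤ t → t ≤ θ / 2 →
            Real.log (∫ y, Real.exp (t * f y) ∂Q)
              ≤ t * (∫ y, f y ∂Q) + b * t ^ 2 := by
  refine ⟨2 * m₂ + 16 / θ ^ 2 * m₁, by positivity, ?_⟩
  intro 𝒴 _ Q hQ f hf hIexp hIexp_le hIsq hIsq_le t ht htθ
  have hθ2 : (0:ℝ) < θ ^ 2 := by positivity
  -- f is integrable
  have hIf : Integrable f Q := by
    refine Integrable.mono' ((hIsq.add (integrable_const 1)).div_const 2)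
      hf.aestronglyMeasurable (Filter.Eventually.of_forall fun y => ?_)
    simp only [Pi.add_apply, Pi.div_apply]
    have := sq_nonneg (|f y| - 1)
    have : |f y| ≤ (f y ^ 2 + 1) / 2 := by nlinarith [sq_abs (f y)]
    simpa [Real.norm_eq_abs] using this
  -- exp(t f) is integrable
  have hItexp : Integrable (fun y => Real.exp (t * f y)) Q := by
    refine Integrable.mono' (hIexp.add (integrable_const 1))
      (hf.const_mul t).exp.aestronglyMeasurable (Filter.Eventually.of_forall fun y => ?_)
    simp only [Pi.add_apply]
    rw [Real.norm_eq_abs, abs_of_pos (Real.exp_pos _)]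
    rcases le_or_gt (f y) 0 with h | h
    · have : Real.exp (t * f y) ≤ 1 := Real.exp_le_one_iff.mpr (mul_nonpos_of_nonneg_of_nonpos ht h)
      have := Real.exp_pos (θ * f y)
      linarith
    · have : t * f y ≤ θ * f y := by nlinarith
      have := Real.exp_le_exp.mpr this
      have := Real.exp_pos (θ * f y)
      linarith
  -- pointwise bound
  have hpt : ∀ y, Real.exp (t * f y) - 1 - t * f y
      ≤ t ^ 2 * (2 * f y ^ 2 + 16 / θ ^ 2 * Real.exp (θ * f y)) := by
    intro y
    have h0 := exp_sub_one_sub_le (t * f y)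
    have key : f y ^ 2 * Real.exp (t * f y) ≤ f y ^ 2 + 16 / θ ^ 2 * Real.exp (θ * f y) := by
      rcases le_or_gt (f y) 0 with h | h
      · have h1 : Real.exp (t * f y) ≤ 1 :=
          Real.exp_le_one_iff.mpr (mul_nonpos_of_nonneg_of_nonpos ht h)
        have h2 := Real.exp_pos (θ * f y)
        have h3 : f y ^ 2 * Real.exp (t * f y) ≤ f y ^ 2 * 1 :=
          mul_le_mul_of_nonneg_left h1 (sq_nonneg (f y))
        have h4 : (0:ℝ) ≤ 16 / θ ^ 2 * Real.exp (θ * f y) := by positivity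
        linarith
      · have h1 : (θ * f y / 2) ^ 2 ≤ 4 * Real.exp (θ * f y / 2) :=
          sq_le_four_exp (by positivity)
        have h2 : f y ^ 2 ≤ 16 / θ ^ 2 * Real.exp (θ * f y / 2) := by
          rw [div_mul_eq_mul_div, le_div_iff₀ hθ2]
          nlinarith
        have h3 : Real.exp (t * f y) ≤ Real.exp (θ * f y / 2) :=
          Real.exp_le_exp.mpr (by nlinarith)
        have h4 : Real.exp (θ * f y / 2) * Real.exp (θ * f y / 2) = Real.exp (θ * f y) := by
          rw [← Real.exp_add]; ring_nf
        have h5 := Real.exp_pos (θ * f y / 2)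
        have h6 : f y ^ 2 * Real.exp (t * f y) ≤ 16 / θ ^ 2 * Real.exp (θ * f y) := by
          calc f y ^ 2 * Real.exp (t * f y)
              ≤ (16 / θ ^ 2 * Real.exp (θ * f y / 2)) * Real.exp (θ * f y / 2) := by
                apply mul_le_mul h2 h3 (Real.exp_pos _).le (by positivity)
            _ = 16 / θ ^ 2 * Real.exp (θ * f y) := by rw [mul_assoc, h4]
        nlinarith [sq_nonneg (f y)]
    have hexp := Real.exp_pos (t * f y)
    nlinarith [sq_nonneg (t * f y), sq_nonneg t, sq_nonneg (f y), mul_nonneg (sq_nonneg t) (sq_nonneg (f y))]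
  -- integrate
  have hIg : Integrable (fun y => t ^ 2 * (2 * f y ^ 2 + 16 / θ ^ 2 * Real.exp (θ * f y))) Q :=
    (((hIsq.const_mul 2).add (hIexp.const_mul (16 / θ ^ 2))).const_mul (t ^ 2))
  have hILHS : Integrable (fun y => Real.exp (t * f y) - 1 - t * f y) Q :=
    (hItexp.sub (integrable_const 1)).sub (hIf.const_mul t)
  have hint : (∫ y, (Real.exp (t * f y) - 1 - t * f y) ∂Q)
      ≤ ∫ y, t ^ 2 * (2 * f y ^ 2 + 16 / θ ^ 2 * Real.exp (θ * f y)) ∂Q :=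
    integral_mono hILHS hIg hpt
  have hA : Integrable (fun y => Real.exp (t * f y) - 1) Q := hItexp.sub (integrable_const 1)
  have hB : Integrable (fun y => t * f y) Q := hIf.const_mul t
  have heq : (∫ y, (Real.exp (t * f y) - 1 - t * f y) ∂Q)
      = (∫ y, Real.exp (t * f y) ∂Q) - 1 - t * ∫ y, f y ∂Q := by
    rw [integral_sub hA hB, integral_sub hItexp (integrable_const 1), integral_const_mul]
    simp [measure_univ]
  have heq2 : (∫ y, t ^ 2 * (2 * f y ^ 2 + 16 / θ ^ 2 * Real.exp (θ * f y)) ∂Q)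
      = t ^ 2 * (2 * (∫ y, f y ^ 2 ∂Q) + 16 / θ ^ 2 * ∫ y, Real.exp (θ * f y) ∂Q) := by
    have hC : Integrable (fun y => 2 * f y ^ 2) Q := hIsq.const_mul 2
    have hD : Integrable (fun y => 16 / θ ^ 2 * Real.exp (θ * f y)) Q :=
      hIexp.const_mul (16 / θ ^ 2)
    rw [integral_const_mul, integral_add hC hD, integral_const_mul, integral_const_mul]
  have hbound : (∫ y, Real.exp (t * f y) ∂Q) - 1 - t * (∫ y, f y ∂Q)
      ≤ (2 * m₂ + 16 / θ ^ 2 * m₁) * t ^ 2 := by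
    rw [heq] at hint
    rw [heq2] at hint
    have h16 : (0:ℝ) ≤ 16 / θ ^ 2 := by positivity
    have hS : 2 * (∫ y, f y ^ 2 ∂Q) + 16 / θ ^ 2 * (∫ y, Real.exp (θ * f y) ∂Q)
        ≤ 2 * m₂ + 16 / θ ^ 2 * m₁ := by
      have := mul_le_mul_of_nonneg_left hIexp_le h16
      linarith
    have := mul_le_mul_of_nonneg_left hS (sq_nonneg t)
    nlinarith
  have hpos : 0 < ∫ y, Real.exp (t * f y) ∂Q := by
    have : NeZero Q := ⟨hQ.ne_zero⟩
    exact integral_exp_pos hItexp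
  have hlog := Real.log_le_sub_one_of_pos hpos
  linarith
end
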